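/- Let k be an even integer with k ≥ 4 and let d = (3k+4)/2. Then the maximum length of a symmetric (d,k) circuit code is 4k+6. -/

import Mathlib

/-- The graph of the `d`-dimensional hypercube: vertices are binary vectors of
length `d`, adjacent iff they differ in exactly one coordinate. -/
def hypercube (d : ℕ) : SimpleGraph (Fin d → Bool) where
  Adj x y := hammingDist x y = 1
  symm := by
    constructor
    intro x y h
    rwa [hammingDist_comm]
  loopless := by
    constructor
    intro x h
    simp [hammingDist_self] at h

/-- Distance along a cycle of length `N` between positions `i` and `j`. -/
def cycDist {N : ℕ} (i j : ZMod N) : ℕ := min (i - j).val (j - i).val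

/-- `x : ZMod N → (Fin d → Bool)` is a `(d,k)` circuit code of length `N`:
a cycle in the hypercube `I(d)` satisfying the spread-`k` distance requirement. -/
structure IsCircuitCode (d k N : ℕ) (x : ZMod N → Fin d → Bool) : Prop where
  inj : Function.Injective x
  adj : ∀ i : ZMod N, (hypercube d).Adj (x i) (x (i + 1))
  spread : ∀ i j : ZMod N, min (cycDist i j) k ≤ (hypercube d).dist (x i) (x j)

/-- `τ` is the transition sequence of the cycle `x`: `τ i` is the unique
coordinate in which `x i` and `x (i+1)` differ. -/
def IsTransitionSeq {d N : ℕ} (x : ZMod N → Fin d → Bool) (τ : ZMod N → Fin d) : Prop :=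
  ∀ (i : ZMod N) (j : Fin d), x (i + 1) j ≠ x i j ↔ j = τ i

/-- The segment of `τ` of length `m` starting at position `start` is a bit run:
all of its entries are distinct. -/
def IsBitRun {d N : ℕ} (τ : ZMod N → Fin d) (start : ZMod N) (m : ℕ) : Prop :=
  ∀ a b : Fin m, τ (start + ((a : ℕ) : ZMod N)) = τ (start + ((b : ℕ) : ZMod N)) → a = b

/-- `δ(ω)`: the number of coordinates appearing an odd number of times in the
segment of `τ` of length `m` starting at `start`. -/
def segDelta {d N : ℕ} (τ : ZMod N → Fin d) (start : ZMod N) (m : ℕ) : ℕ :=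
  (Finset.univ.filter fun c : Fin d =>
    Odd (Finset.univ.filter fun t : Fin m => τ (start + ((t : ℕ) : ZMod N)) = c).card).card

/-!
Write `N = 2p`. A symmetric transition sequence `τ` is then `p`-periodic; let `n c` be the number
of occurrences of the letter `c` in a period and `A` the set of letters with `n c` odd. The
Hamming distance between `x s` and `x (s + m)` is the number of letters occurring an odd number
of times in the window `τ s, …, τ (s + m - 1)`, so spread `k` bounds it below by `k` for windows
of length between `k` and `N - k`, and keeps equal letters more than `k` apart. Windows of length
`p` and `p + 1` give `|A| > k`. If every `n c ≤ 2` then `p + |A| ≤ 2d`, i.e. `p ≤ 2k + 3`.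
Otherwise some letter occurs three times per period, which forces `p ≥ 3k + 3`; then comparing
every window of length `2k + 2`, `k + 1` or `2` with the window `p` steps longer and averaging
over all starting points contradicts `2d = 3k + 4` (separately for `|A| = k + 1` and
`|A| ≥ k + 2`).

For `k = 2h` the sequence `0, h+1, 1, h+2, …, 2h, h, 0, 2h+1, 1, 2h+2, …, h, 3h+1` of length
`4h + 3`, run through twice, is the transition sequence of a symmetric code of length `4k + 6`:
repeated letters in a window of length `m ≤ 4h + 3` come in pairs `2h + 1` or `2h + 2` apart,
the window contains at most `(m - 2h) / 2` such pairs, and so at least `min m (2h)` of its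
letters occur an odd number of times.
-/

open Finset

theorem hammingDist_le_length {d : ℕ} {a b : Fin d → Bool} (w : (hypercube d).Walk a b) :
    hammingDist a b ≤ w.length := by
  induction w with
  | nil => simp
  | @cons u v _ huv _ ih =>
    calc hammingDist u _ ≤ hammingDist u v + hammingDist v _ := hammingDist_triangle _ _ _
      _ ≤ _ := by rw [SimpleGraph.Walk.length_cons, show hammingDist u v = 1 from huv]; omega

theorem exists_walk_length_eq_hammingDist {d : ℕ} (a b : Fin d → Bool) :
    ∃ w : (hypercube d).Walk a b, w.length = hammingDist a b := by
  induction h : hammingDist a b generalizing a with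
  | zero => rw [hammingDist_eq_zero] at h; subst h; exact ⟨.nil, rfl⟩
  | succ n ih =>
    obtain ⟨i, hi⟩ : ∃ i, a i ≠ b i := Function.ne_iff.mp (hammingDist_pos.mp (by omega))
    set a' := Function.update a i (b i)
    have hfilter :
        ({j | a' j ≠ b j} : Finset (Fin d)) = ({j | a j ≠ b j} : Finset _).erase i := by
      ext j
      by_cases hj : j = i <;> simp [a', hj]
    have hstep : (hypercube d).Adj a a' := by
      change hammingDist a a' = 1
      rw [hammingDist, card_eq_one]
      refine ⟨i, ?_⟩
      ext j
      by_cases hj : j = i <;> simp [a', hj, hi]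
    obtain ⟨w, hw⟩ := ih a' (by
      rw [hammingDist, hfilter, card_erase_of_mem (by simpa using hi)]
      exact congrArg (· - 1) h)
    exact ⟨.cons hstep w, by simp [hw]⟩

theorem hypercube_dist_eq_hammingDist {d : ℕ} (a b : Fin d → Bool) :
    (hypercube d).dist a b = hammingDist a b := by
  obtain ⟨w, hw⟩ := exists_walk_length_eq_hammingDist a b
  obtain ⟨w', hw'⟩ := SimpleGraph.Reachable.exists_walk_length_eq_dist ⟨w⟩
  exact le_antisymm (hw ▸ SimpleGraph.dist_le w) (hw' ▸ hammingDist_le_length w')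

theorem card_odd_add_add_two_mul {ι : Type*} [Fintype ι] (f g : ι → ℕ) :
    #{c | Odd (f c + g c)} + 2 * #{c | Odd (f c) ∧ Odd (g c)}
      = #{c | Odd (f c)} + #{c | Odd (g c)} := by
  simp only [card_filter, mul_sum, ← sum_add_distrib]
  refine sum_congr rfl fun c _ => ?_
  rcases Nat.even_or_odd (f c) with hf | hf <;> rcases Nat.even_or_odd (g c) with hg | hg <;>
    simp [hf, hg, Nat.odd_add, Nat.not_odd_iff_even.mpr, Nat.not_even_iff_odd.mpr]

variable {d N k : ℕ} {x : ZMod N → Fin d → Bool} {τ : ZMod N → Fin d}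

def windowCount (τ : ZMod N → Fin d) (c : Fin d) (s : ZMod N) (m : ℕ) : ℕ :=
  #{t : Fin m | τ (s + ((t : ℕ) : ZMod N)) = c}

theorem segDelta_eq_card (s : ZMod N) (m : ℕ) :
    segDelta τ s m = #{c | Odd (windowCount τ c s m)} := rfl

theorem windowCount_eq_sum (c : Fin d) (s : ZMod N) (m : ℕ) :
    windowCount τ c s m = ∑ j ∈ range m, if τ (s + (j : ℕ)) = c then 1 else 0 := by
  rw [windowCount, card_filter,
    Fin.sum_univ_eq_sum_range (fun j => if τ (s + j) = c then 1 else 0)]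

theorem windowCount_add (c : Fin d) (s : ZMod N) (m n : ℕ) :
    windowCount τ c s (m + n) = windowCount τ c s m + windowCount τ c (s + m) n := by
  simp only [windowCount_eq_sum, sum_range_add, Nat.cast_add, add_assoc]

theorem windowCount_zero (c : Fin d) (s : ZMod N) : windowCount τ c s 0 = 0 := by
  simp [windowCount]

theorem windowCount_one (c : Fin d) (s : ZMod N) :
    windowCount τ c s 1 = if τ s = c then 1 else 0 := by
  rw [windowCount_eq_sum, sum_range_one]
  simp

theorem windowCount_two (c : Fin d) (s : ZMod N) :
    windowCount τ c s 2 = (if τ s = c then 1 else 0) + if τ (s + 1) = c then 1 else 0 := by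
  rw [windowCount_add (m := 1) (n := 1), windowCount_one, windowCount_one, Nat.cast_one]

theorem odd_windowCount_one_iff (c : Fin d) (s : ZMod N) :
    Odd (windowCount τ c s 1) ↔ τ s = c := by
  rw [windowCount_one]; split_ifs <;> simp [*]

theorem windowCount_le (c : Fin d) (s : ZMod N) (m : ℕ) : windowCount τ c s m ≤ m :=
  (card_filter_le _ _).trans_eq (by simp)

theorem exists_apply_eq_of_windowCount_pos {c : Fin d} {s : ZMod N} {m : ℕ}
    (h : 0 < windowCount τ c s m) : ∃ j < m, τ (s + j) = c := by
  obtain ⟨j, hj⟩ := card_pos.mp h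
  exact ⟨j, j.isLt, (mem_filter.mp hj).2⟩

theorem two_le_windowCount {c : Fin d} {s : ZMod N} {i j m : ℕ} (hij : i < j) (hjm : j < m)
    (hi : τ (s + i) = c) (hj : τ (s + j) = c) : 2 ≤ windowCount τ c s m :=
  one_lt_card.mpr ⟨⟨i, by omega⟩, by simpa using hi, ⟨j, hjm⟩, by simpa using hj,
    Fin.ne_of_val_ne hij.ne⟩

theorem sum_windowCount (s : ZMod N) (m : ℕ) : ∑ c, windowCount τ c s m = m := by
  simp_rw [windowCount_eq_sum]
  rw [sum_comm]
  simp

theorem windowCount_self_eq_card [NeZero N] (c : Fin d) (s : ZMod N) :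
    windowCount τ c s N = #{i | τ i = c} := by
  refine card_nbij' (fun t => s + ((t : ℕ) : ZMod N)) (fun i => ⟨(i - s).val, ZMod.val_lt _⟩)
    ?_ ?_ ?_ ?_ <;> intro a ha
  · simpa using ha
  · simpa using ha
  · ext; simp [ZMod.val_natCast_of_lt a.isLt]
  · simp

theorem sum_windowCount_start [NeZero N] (c : Fin d) (m : ℕ) :
    ∑ s, windowCount τ c s m = m * #{i | τ i = c} := by
  simp_rw [windowCount_eq_sum]
  rw [sum_comm]
  have shift (j : ℕ) :
      (∑ s : ZMod N, if τ (s + (j : ℕ)) = c then 1 else 0) = #{i | τ i = c} := by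
    rw [card_filter]
    exact Fintype.sum_equiv (Equiv.addRight _) _ _ fun _ => rfl
  simp [shift]

theorem segDelta_eq_sum (s : ZMod N) (m : ℕ) :
    segDelta τ s m = ∑ c, if Odd (windowCount τ c s m) then 1 else 0 := by
  rw [segDelta_eq_card, card_filter]

theorem segDelta_eq_of_windowCount_le_one {s : ZMod N} {m : ℕ}
    (h : ∀ c, windowCount τ c s m ≤ 1) : segDelta τ s m = m := by
  conv_rhs => rw [← sum_windowCount (τ := τ) s m]
  rw [segDelta_eq_sum]
  refine sum_congr rfl fun c _ => ?_
  rcases Nat.le_one_iff_eq_zero_or_eq_one.mp (h c) with h0 | h1 <;> simp [*]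

theorem segDelta_add_two_le {s : ZMod N} {m : ℕ} {c₀ : Fin d}
    (h : 2 ≤ windowCount τ c₀ s m) : segDelta τ s m + 2 ≤ m := by
  conv_rhs => rw [← sum_windowCount (τ := τ) s m]
  have hpt (c : Fin d) :
      (if Odd (windowCount τ c s m) then 1 else 0) + (if c = c₀ then 2 else 0)
        ≤ windowCount τ c s m := by
    split_ifs with hodd hc hc <;> simp only [Nat.odd_iff] at hodd <;> subst_vars <;> omega
  calc segDelta τ s m + 2
      = ∑ c, ((if Odd (windowCount τ c s m) then 1 else 0) + if c = c₀ then 2 else 0) := by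
        simp [segDelta_eq_sum, sum_add_distrib]
    _ ≤ _ := sum_le_sum fun c _ => hpt c

theorem segDelta_add_le_two_mul {s : ZMod N} {m : ℕ} (h : ∀ c, windowCount τ c s m ≤ 2) :
    segDelta τ s m + m ≤ 2 * d := by
  calc segDelta τ s m + m
      = ∑ c, ((if Odd (windowCount τ c s m) then 1 else 0) + windowCount τ c s m) := by
        rw [sum_add_distrib, sum_windowCount, segDelta_eq_sum]
    _ ≤ ∑ _c : Fin d, 2 := sum_le_sum fun c _ => ?_
    _ = 2 * d := by simp [mul_comm]
  have := h c
  split_ifs with hodd <;> simp only [Nat.odd_iff] at hodd <;> omega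

theorem two_mul_card_windowCount_pos_le (s : ZMod N) (m : ℕ) :
    2 * #{c | 0 < windowCount τ c s m} ≤ segDelta τ s m + m := by
  calc 2 * #{c | 0 < windowCount τ c s m}
      = ∑ c, if 0 < windowCount τ c s m then 2 else 0 := by rw [card_filter, mul_sum]; simp
    _ ≤ ∑ c, ((if Odd (windowCount τ c s m) then 1 else 0) + windowCount τ c s m) :=
        sum_le_sum fun c _ => by split_ifs with h1 h2 <;> simp only [Nat.odd_iff] at * <;> omega
    _ = segDelta τ s m + m := by rw [sum_add_distrib, sum_windowCount, segDelta_eq_sum]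

theorem le_segDelta_add_two_mul_card (s : ZMod N) (m : ℕ) :
    m ≤ segDelta τ s m
      + 2 * #{j : Fin m | ∃ j' : Fin m, j < j' ∧ τ (s + (j' : ℕ)) = τ (s + (j : ℕ))} := by
  set R : Finset (Fin m) :=
    {j | ∃ j' : Fin m, j < j' ∧ τ (s + (j' : ℕ)) = τ (s + (j : ℕ))}
  have hlast : #Rᶜ ≤ #{c | 0 < windowCount τ c s m} := by
    refine card_le_card_of_injOn (fun j => τ (s + (j : ℕ))) (fun j _ => ?_)
      fun j hj j' hj' h => ?_
    · simp only [coe_filter, mem_univ, true_and, Set.mem_ofPred_eq]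
      exact card_pos.mpr ⟨j, by simp⟩
    · simp only [R, coe_compl, coe_filter, Set.mem_compl_iff, Set.mem_ofPred_eq, mem_univ,
        true_and, not_exists, not_and] at hj hj'
      rcases lt_trichotomy j j' with hlt | heq | hgt
      · exact absurd h.symm (hj j' hlt)
      · exact heq
      · exact absurd h (hj' j hgt)
  have := two_mul_card_windowCount_pos_le (τ := τ) s m
  have := card_add_card_compl R
  rw [Fintype.card_fin] at this
  omega

theorem IsTransitionSeq.ne_iff_odd_windowCount (hτ : IsTransitionSeq x τ) (s : ZMod N) (m : ℕ)
    (c : Fin d) : x (s + m) c ≠ x s c ↔ Odd (windowCount τ c s m) := by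
  induction m with
  | zero => simp [windowCount_zero]
  | succ m ih =>
    have hstep := hτ (s + m) c
    rw [Nat.cast_succ, ← add_assoc, windowCount_add, windowCount_one]
    by_cases hc : τ (s + m) = c
    · rw [if_pos hc, Nat.odd_add_one, ← ih]
      have := hstep.mpr hc.symm
      revert this
      cases x (s + m + 1) c <;> cases x (s + m) c <;> cases x s c <;> simp
    · have hkeep : x (s + m + 1) c = x (s + m) c := not_not.mp fun h => hc (hstep.mp h).symm
      rw [if_neg hc, add_zero, ← ih, hkeep]

theorem IsTransitionSeq.hammingDist_eq_segDelta (hτ : IsTransitionSeq x τ) (s : ZMod N)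
    (m : ℕ) : hammingDist (x s) (x (s + m)) = segDelta τ s m := by
  rw [hammingDist, segDelta_eq_card]
  congr 1
  ext c
  simp [← hτ.ne_iff_odd_windowCount, eq_comm]

def prefixParity (τ : ZMod N → Fin d) (i : ZMod N) (c : Fin d) : Bool :=
  decide (Odd (windowCount τ c 0 i.val))

theorem ZMod.val_add_one_of_lt [NeZero N] {i : ZMod N} (h : i.val + 1 < N) :
    (i + 1).val = i.val + 1 := by
  rw [ZMod.val_add_of_lt, ZMod.val_one_eq_one_mod, Nat.mod_eq_of_lt (by omega)]
  rwa [ZMod.val_one_eq_one_mod, Nat.mod_eq_of_lt (by omega)]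

theorem ZMod.add_one_eq_zero_of_val_add_one_eq [NeZero N] {i : ZMod N} (h : i.val + 1 = N) :
    i + 1 = 0 := by
  rw [← ZMod.natCast_zmod_val i, ← Nat.cast_add_one, h, ZMod.natCast_self]

theorem isTransitionSeq_prefixParity [NeZero N] (heven : ∀ c, Even #{i | τ i = c}) :
    IsTransitionSeq (prefixParity τ) τ := by
  intro i c
  have hstep : windowCount τ c 0 (i.val + 1)
      = windowCount τ c 0 i.val + if τ i = c then 1 else 0 := by
    rw [windowCount_add, windowCount_one, zero_add, ZMod.natCast_zmod_val]
  simp only [prefixParity, ne_eq, decide_eq_decide, eq_comm (a := c)]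
  rcases Nat.lt_or_ge (i.val + 1) N with hlt | hge
  · rw [ZMod.val_add_one_of_lt hlt, hstep]
    generalize windowCount τ c 0 i.val = n
    by_cases h : τ i = c <;> by_cases ho : Odd n <;> simp [h, ho, Nat.odd_add_one]
  · have hN : i.val + 1 = N := by have := ZMod.val_lt i; omega
    have hfull : Even (windowCount τ c 0 i.val + if τ i = c then 1 else 0) := by
      rw [← hstep, hN, windowCount_self_eq_card]
      exact heven c
    rw [ZMod.add_one_eq_zero_of_val_add_one_eq hN, ZMod.val_zero, windowCount_zero]
    by_cases h : τ i = c
    · rw [if_pos h, Nat.even_add_one, Nat.not_even_iff_odd] at hfull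
      simp [h, hfull]
    · rw [if_neg h, add_zero, ← Nat.not_odd_iff_even] at hfull
      simp [h, hfull]

theorem cycDist_comm (i j : ZMod N) : cycDist i j = cycDist j i := min_comm _ _

theorem cycDist_add_natCast [NeZero N] (s : ZMod N) {m : ℕ} (hm : m < N) :
    cycDist s (s + m) = min m (N - m) := by
  rcases Nat.eq_zero_or_pos m with rfl | hpos
  · simp [cycDist]
  have hval : (m : ZMod N).val = m := ZMod.val_natCast_of_lt hm
  have hne : (m : ZMod N) ≠ 0 := fun h => by rw [h, ZMod.val_zero] at hval; omega
  rw [cycDist, sub_add_cancel_left, add_sub_cancel_left, ZMod.neg_val, if_neg hne, hval,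
    min_comm]

theorem IsCircuitCode.min_le_segDelta [NeZero N] (hC : IsCircuitCode d k N x)
    (hτ : IsTransitionSeq x τ) (s : ZMod N) {m : ℕ} (hm : m < N) :
    min (min m (N - m)) k ≤ segDelta τ s m := by
  have := hC.spread s (s + m)
  rwa [cycDist_add_natCast s hm, hypercube_dist_eq_hammingDist,
    hτ.hammingDist_eq_segDelta] at this

theorem IsCircuitCode.windowCount_le_one [NeZero N] (hC : IsCircuitCode d k N x)
    (hτ : IsTransitionSeq x τ) (hkN : 2 * k < N) {m : ℕ} (hm : m ≤ k + 1) (c : Fin d)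
    (s : ZMod N) : windowCount τ c s m ≤ 1 := by
  by_contra! h
  have := segDelta_add_two_le h
  have := hC.min_le_segDelta hτ s (m := m) (by omega)
  omega

theorem IsCircuitCode.eq_of_apply_eq [NeZero N] (hC : IsCircuitCode d k N x)
    (hτ : IsTransitionSeq x τ) (hkN : 2 * k < N) (s : ZMod N) {i j : ℕ} (hij : i ≤ j)
    (hjk : j ≤ i + k) (h : τ (s + i) = τ (s + j)) : i = j := by
  by_contra hne
  have := hC.windowCount_le_one hτ hkN (m := j - i + 1) (by omega) (τ (s + i)) (s + i)
  have := two_le_windowCount (τ := τ) (c := τ (s + i)) (s := s + i) (i := 0) (j := j - i)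
    (m := j - i + 1) (by omega) (by omega) (by simp)
    (by rw [add_assoc, ← Nat.cast_add, Nat.add_sub_cancel' hij, h])
  omega

theorem IsCircuitCode.windowCount_le_div [NeZero N] (hC : IsCircuitCode d k N x)
    (hτ : IsTransitionSeq x τ) (hkN : 2 * k < N) (c : Fin d) (s : ZMod N) (m : ℕ) :
    windowCount τ c s m ≤ (m + k) / (k + 1) := by
  rcases Nat.eq_zero_or_pos m with rfl | hm
  · simp [windowCount_zero]
  have hrange : (m + k) / (k + 1) = (m - 1) / (k + 1) + 1 := by
    rw [← Nat.add_div_right _ (by omega : 0 < k + 1)]; congr 1; omega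
  calc windowCount τ c s m ≤ #(range ((m + k) / (k + 1))) := by
        refine card_le_card_of_injOn (fun t : Fin m => (t : ℕ) / (k + 1)) (fun t _ => ?_) ?_
        · simp only [coe_range, Set.mem_Iio, hrange]
          exact Nat.lt_succ_of_le (Nat.div_le_div_right (by omega))
        · have hclose (a b : ℕ) (h : a / (k + 1) = b / (k + 1)) : b ≤ a + k := by
            by_contra! hfar
            have := Nat.div_le_div_right (c := k + 1) (show a + (k + 1) ≤ b by omega)
            rw [Nat.add_div_right _ (by omega : 0 < k + 1)] at this
            omega
          intro t ht t' ht' heq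
          simp only [coe_filter, Set.mem_ofPred_eq, mem_univ, true_and] at ht ht'
          have heq' : τ (s + (t : ℕ)) = τ (s + (t' : ℕ)) := ht.trans ht'.symm
          have := hclose _ _ heq
          have := hclose _ _ heq.symm
          rcases le_total (t : ℕ) t' with hle | hle
          · exact Fin.ext (hC.eq_of_apply_eq hτ hkN s hle (by omega) heq')
          · exact Fin.ext (hC.eq_of_apply_eq hτ hkN s hle (by omega) heq'.symm).symm
    _ = (m + k) / (k + 1) := card_range _

theorem IsCircuitCode.windowCount_le_two [NeZero N] (hC : IsCircuitCode d k N x)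
    (hτ : IsTransitionSeq x τ) (hkN : 2 * k < N) {m : ℕ} (hm : m ≤ 2 * k + 2) (c : Fin d)
    (s : ZMod N) : windowCount τ c s m ≤ 2 :=
  (hC.windowCount_le_div hτ hkN c s m).trans
    ((Nat.div_le_iff_le_mul_add_pred (by omega)).mpr (by ring_nf; omega))

theorem isCircuitCode_of_le_segDelta [NeZero N] (hk : 0 < k) (hτ : IsTransitionSeq x τ)
    (h : ∀ s m, 2 * m ≤ N → min m k ≤ segDelta τ s m) : IsCircuitCode d k N x := by
  have hhalf (s : ZMod N) (m : ℕ) (hm : 2 * m ≤ N) :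
      min (cycDist s (s + m)) k ≤ (hypercube d).dist (x s) (x (s + m)) := by
    rw [hypercube_dist_eq_hammingDist, hτ.hammingDist_eq_segDelta,
      cycDist_add_natCast s (by have := NeZero.pos N; omega)]
    have := h s m hm
    omega
  have hspread (i j : ZMod N) : min (cycDist i j) k ≤ (hypercube d).dist (x i) (x j) := by
    rcases le_total (2 * (j - i).val) N with hle | hle
    · simpa using hhalf i _ hle
    · have hji : j - i ≠ 0 := fun h0 => by
        rw [h0, ZMod.val_zero] at hle
        exact NeZero.ne N (by omega)
      have hle' : 2 * (i - j).val ≤ N := by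
        rw [← neg_sub, ZMod.neg_val, if_neg hji]
        have := ZMod.val_lt (j - i)
        omega
      simpa [cycDist_comm, SimpleGraph.dist_comm] using hhalf j _ hle'
  refine ⟨fun i j hx => ?_, fun i => ?_, hspread⟩
  · have := hspread i j
    rw [hx, SimpleGraph.dist_self, Nat.le_zero, Nat.min_eq_zero_iff, cycDist,
      Nat.min_eq_zero_iff, ZMod.val_eq_zero, ZMod.val_eq_zero, sub_eq_zero, sub_eq_zero] at this
    rcases this with (h | h) | h
    exacts [h, h.symm, absurd h hk.ne']
  · change hammingDist (x i) (x (i + 1)) = 1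
    rw [← Nat.cast_one, hτ.hammingDist_eq_segDelta]
    exact segDelta_eq_of_windowCount_le_one fun c => windowCount_le c i 1

theorem sum_card_filter_odd_windowCount [NeZero N] (A : Finset (Fin d)) (L : ℕ) :
    ∑ t, #{c ∈ A | Odd (windowCount τ c t L)}
      = ∑ c ∈ A, #{t | Odd (windowCount τ c t L)} :=
  sum_card_bipartiteAbove_eq_sum_card_bipartiteBelow (s := univ) (t := A)
    (r := fun t c => Odd (windowCount τ c t L))

theorem sum_card_filter_odd_add_le [NeZero N] (A : Finset (Fin d)) {L : ℕ}
    (h : ∀ c t, windowCount τ c t L ≤ 2) :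
    ∑ t, #{c ∈ A | Odd (windowCount τ c t L)} + L * ∑ c ∈ A, #{i | τ i = c}
      ≤ 2 * N * #A := by
  rw [sum_card_filter_odd_windowCount, mul_sum, ← sum_add_distrib]
  calc _ ≤ ∑ _c ∈ A, 2 * N := sum_le_sum fun c _ => ?_
    _ = 2 * N * #A := by rw [sum_const, smul_eq_mul, mul_comm]
  rw [← sum_windowCount_start, card_filter, ← sum_add_distrib]
  calc _ ≤ ∑ _t : ZMod N, 2 := sum_le_sum fun t _ => ?_
    _ = 2 * N := by simp [mul_comm]
  have := h c t
  split_ifs with hodd <;> simp only [Nat.odd_iff] at hodd <;> omega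

theorem sum_card_filter_odd_eq [NeZero N] (A : Finset (Fin d)) {L : ℕ}
    (h : ∀ c t, windowCount τ c t L ≤ 1) :
    ∑ t, #{c ∈ A | Odd (windowCount τ c t L)} = L * ∑ c ∈ A, #{i | τ i = c} := by
  rw [sum_card_filter_odd_windowCount, mul_sum]
  refine sum_congr rfl fun c _ => ?_
  rw [← sum_windowCount_start, card_filter]
  refine sum_congr rfl fun t _ => ?_
  rcases Nat.le_one_iff_eq_zero_or_eq_one.mp (h c t) with h' | h' <;> simp [h']

theorem card_filter_apply_mem [NeZero N] (A : Finset (Fin d)) :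
    #{i | τ i ∈ A} = ∑ c ∈ A, #{i | τ i = c} := by
  rw [card_eq_sum_card_fiberwise (f := τ) (t := A) fun i hi => by simpa using hi]
  refine sum_congr rfl fun c hc => congrArg card ?_
  ext i
  simp only [mem_filter, mem_univ, true_and, and_iff_right_iff_imp]
  exact fun h => h ▸ hc

theorem two_mul_card_le_of_add_one_notMem [NeZero N] {S : Finset (ZMod N)}
    (h : ∀ s ∈ S, s + 1 ∉ S) : 2 * #S ≤ N := by
  have hinj : #S ≤ #Sᶜ :=
    card_le_card_of_injOn (· + 1) (fun s hs => by simpa using h s hs)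
      (fun _ _ _ _ => add_right_cancel)
  have := card_add_card_compl S
  rw [ZMod.card] at this
  omega

section Periodic

variable {p : ℕ}

def oddLetters (τ : ZMod N → Fin d) (p : ℕ) : Finset (Fin d) :=
  {c | Odd (windowCount τ c 0 p)}

theorem card_oddLetters : #(oddLetters τ p) = segDelta τ 0 p := rfl

theorem windowCount_add_period (hper : ∀ i : ZMod N, τ (i + p) = τ i) (c : Fin d) (s : ZMod N)
    (m : ℕ) : windowCount τ c (s + p) m = windowCount τ c s m := by
  simp only [windowCount, add_right_comm s (p : ZMod N), hper]

theorem two_mul_windowCount_period [NeZero N] (hN : N = 2 * p)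
    (hper : ∀ i : ZMod N, τ (i + p) = τ i) (c : Fin d) (s : ZMod N) :
    2 * windowCount τ c s p = #{i | τ i = c} := by
  rw [← windowCount_self_eq_card c s, congrArg (windowCount τ c s) (by omega : N = p + p),
    windowCount_add, windowCount_add_period hper, two_mul]

theorem windowCount_period [NeZero N] (hN : N = 2 * p) (hper : ∀ i : ZMod N, τ (i + p) = τ i)
    (c : Fin d) (s : ZMod N) : windowCount τ c s p = windowCount τ c 0 p := by
  have := two_mul_windowCount_period hN hper c s
  have := two_mul_windowCount_period hN hper c 0
  omega

theorem sum_windowCount_oddLetters_add_compl (τ : ZMod N → Fin d) (p : ℕ) :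
    ∑ c ∈ oddLetters τ p, windowCount τ c 0 p
      + ∑ c ∈ (oddLetters τ p)ᶜ, windowCount τ c 0 p = p := by
  rw [sum_add_sum_compl, sum_windowCount]

theorem card_filter_odd_add_compl (A : Finset (Fin d)) (s : ZMod N) (m : ℕ) :
    #{c ∈ A | Odd (windowCount τ c s m)} + #{c ∈ Aᶜ | Odd (windowCount τ c s m)}
      = segDelta τ s m := by
  rw [segDelta_eq_card,
    ← card_filter_add_card_filter_not (s := {c | Odd (windowCount τ c s m)}) (· ∈ A)]
  congr 2 <;> ext c <;> simp [and_comm]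

/-- The window `[s - p, s + m)` sees every letter `windowCount τ c 0 p` times more than
`[s, s + m)`, which flips the parity exactly on `oddLetters τ p`. -/
theorem segDelta_sub_period_add [NeZero N] (hN : N = 2 * p)
    (hper : ∀ i : ZMod N, τ (i + p) = τ i) (s : ZMod N) (m : ℕ) :
    segDelta τ (s - p) (p + m) + 2 * #{c ∈ oddLetters τ p | Odd (windowCount τ c s m)}
      = segDelta τ 0 p + segDelta τ s m := by
  have hsplit (c : Fin d) :
      windowCount τ c (s - p) (p + m) = windowCount τ c 0 p + windowCount τ c s m := by
    rw [windowCount_add, windowCount_period hN hper, sub_add_cancel]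
  simp only [segDelta_eq_card, hsplit, oddLetters, filter_filter]
  exact card_odd_add_add_two_mul _ _

theorem IsCircuitCode.lt_card_oddLetters [NeZero N] (hC : IsCircuitCode d k N x)
    (hτ : IsTransitionSeq x τ) (hN : N = 2 * p) (hper : ∀ i : ZMod N, τ (i + p) = τ i)
    (hk : 0 < k) (hkp : k + 1 ≤ p) :
    k < #(oddLetters τ p) := by
  have hle : k ≤ #(oddLetters τ p) := by
    have := hC.min_le_segDelta hτ 0 (m := p) (by omega)
    rw [card_oddLetters]; omega
  obtain ⟨c, hc⟩ := card_pos.mp (hk.trans_le hle)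
  obtain ⟨j, -, hj⟩ := exists_apply_eq_of_windowCount_pos (mem_filter.mp hc).2.pos
  rw [zero_add] at hj
  have hid := segDelta_sub_period_add hN hper j 1
  have hδ : segDelta τ j 1 = 1 := segDelta_eq_of_windowCount_le_one fun c => windowCount_le c _ 1
  have ha : 0 < #{c ∈ oddLetters τ p | Odd (windowCount τ c j 1)} :=
    card_pos.mpr ⟨c, mem_filter.mpr ⟨hc, (odd_windowCount_one_iff _ _).mpr hj⟩⟩
  have := hC.min_le_segDelta hτ (j - p) (m := p + 1) (by omega)
  rw [card_oddLetters]; omega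

theorem IsCircuitCode.three_mul_le_of_three_le_windowCount [NeZero N]
    (hC : IsCircuitCode d k N x)
    (hτ : IsTransitionSeq x τ) (hN : N = 2 * p) (hper : ∀ i : ZMod N, τ (i + p) = τ i)
    (hkN : 2 * k < N) {c : Fin d} (h : 3 ≤ windowCount τ c 0 p) : 3 * (k + 1) ≤ p := by
  obtain ⟨j, -, hj⟩ := exists_apply_eq_of_windowCount_pos (lt_of_lt_of_le (by norm_num) h)
  rw [zero_add] at hj
  have hcount : windowCount τ c j (p + 1) = windowCount τ c 0 p + 1 := by
    rw [windowCount_add, windowCount_period hN hper, windowCount_one, hper, if_pos hj]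
  have h4 : 4 ≤ (p + 1 + k) / (k + 1) := by
    have := hC.windowCount_le_div hτ hkN c j (p + 1)
    omega
  have := (Nat.le_div_iff_mul_le (by omega)).mp h4
  omega

theorem IsCircuitCode.two_mul_le_card_oddLetters_add [NeZero N] (hC : IsCircuitCode d k N x)
    (hτ : IsTransitionSeq x τ) (hN : N = 2 * p) (hper : ∀ i : ZMod N, τ (i + p) = τ i)
    {L : ℕ} (hkL : k ≤ L) (hLp : L + k < p) (t : ZMod N) :
    2 * k ≤ #(oddLetters τ p)
      + 2 * #{c ∈ (oddLetters τ p)ᶜ | Odd (windowCount τ c t L)} := by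
  have hid := segDelta_sub_period_add hN hper t L
  have hsplit := card_filter_odd_add_compl (τ := τ) (oddLetters τ p) t L
  have := hC.min_le_segDelta hτ t (m := L) (by omega)
  have := hC.min_le_segDelta hτ (t - p) (m := p + L) (by omega)
  rw [card_oddLetters]; omega

theorem IsCircuitCode.two_mul_card_filter_oddLetters_add_le [NeZero N]
    (hC : IsCircuitCode d k N x)
    (hτ : IsTransitionSeq x τ) (hN : N = 2 * p) (hper : ∀ i : ZMod N, τ (i + p) = τ i)
    {m : ℕ} (hm : m ≤ k + 1) (hmp : m + k < p) (t : ZMod N) :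
    2 * #{c ∈ oddLetters τ p | Odd (windowCount τ c t m)} + k ≤ #(oddLetters τ p) + m := by
  have hid := segDelta_sub_period_add hN hper t m
  have hδ := segDelta_eq_of_windowCount_le_one (hC.windowCount_le_one hτ (by omega) hm · t)
  have := hC.min_le_segDelta hτ (t - p) (m := p + m) (by omega)
  rw [card_oddLetters]; omega

theorem IsCircuitCode.sum_compl_oddLetters_le [NeZero N] (hC : IsCircuitCode d k N x)
    (hτ : IsTransitionSeq x τ) (hN : N = 2 * p) (hper : ∀ i : ZMod N, τ (i + p) = τ i)
    (hp : 3 * k + 2 < p) :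
    2 * k * p + 4 * (k + 1) * ∑ c ∈ (oddLetters τ p)ᶜ, windowCount τ c 0 p
      ≤ #(oddLetters τ p) * p + 4 * p * #(oddLetters τ p)ᶜ := by
  have hpoint : N * (2 * k) ≤ N * #(oddLetters τ p)
      + 2 * ∑ t, #{c ∈ (oddLetters τ p)ᶜ | Odd (windowCount τ c t (2 * k + 2))} :=
    calc N * (2 * k) = ∑ _t : ZMod N, 2 * k := by simp
      _ ≤ ∑ t : ZMod N, (#(oddLetters τ p)
            + 2 * #{c ∈ (oddLetters τ p)ᶜ | Odd (windowCount τ c t (2 * k + 2))}) :=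
        sum_le_sum fun t _ =>
          hC.two_mul_le_card_oddLetters_add hτ hN hper (by omega) (by omega) t
      _ = _ := by simp [sum_add_distrib, mul_sum]
  have hcount := sum_card_filter_odd_add_le (τ := τ) (oddLetters τ p)ᶜ
    (hC.windowCount_le_two hτ (by omega) le_rfl)
  simp only [← two_mul_windowCount_period hN hper _ 0, ← mul_sum] at hcount
  subst hN
  nlinarith

theorem IsCircuitCode.four_mul_sum_oddLetters_le [NeZero N] (hC : IsCircuitCode d k N x)
    (hτ : IsTransitionSeq x τ) (hN : N = 2 * p) (hper : ∀ i : ZMod N, τ (i + p) = τ i)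
    (hk : 0 < k) (hp : k + 2 < p) (hα : #(oddLetters τ p) = k + 1) :
    4 * ∑ c ∈ oddLetters τ p, windowCount τ c 0 p ≤ N := by
  have hsep (s : ZMod N) (hs : τ s ∈ oddLetters τ p) : τ (s + 1) ∉ oddLetters τ p := by
    intro hs1
    have hne : τ s ≠ τ (s + 1) := fun h =>
      absurd (hC.eq_of_apply_eq hτ (by omega) s (i := 0) (j := 1) (by omega) (by omega)
        (by simpa using h)) (by omega)
    have hpair : 2 ≤ #{c ∈ oddLetters τ p | Odd (windowCount τ c s 2)} := by
      refine one_lt_card.mpr ⟨τ s, ?_, τ (s + 1), ?_, hne⟩ <;>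
        simp [windowCount_two, hne, hne.symm, hs, hs1]
    have :=
      hC.two_mul_card_filter_oddLetters_add_le hτ hN hper (m := 2) (by omega) (by omega) s
    omega
  have := two_mul_card_le_of_add_one_notMem (S := {s | τ s ∈ oddLetters τ p})
    fun s hs => by simpa using hsep s (by simpa using hs)
  rw [card_filter_apply_mem] at this
  simp only [← two_mul_windowCount_period hN hper _ 0, ← mul_sum] at this
  omega

theorem IsCircuitCode.mul_sum_oddLetters_le [NeZero N] (hC : IsCircuitCode d k N x)
    (hτ : IsTransitionSeq x τ) (hN : N = 2 * p) (hper : ∀ i : ZMod N, τ (i + p) = τ i)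
    (hp : 2 * k + 1 < p) :
    (k + 1) * ∑ c ∈ oddLetters τ p, windowCount τ c 0 p
      ≤ p * ((#(oddLetters τ p) + 1) / 2) := by
  have hpoint : ∑ t : ZMod N, #{c ∈ oddLetters τ p | Odd (windowCount τ c t (k + 1))}
      ≤ ∑ _t : ZMod N, (#(oddLetters τ p) + 1) / 2 :=
    sum_le_sum fun t _ => by
      have :=
        hC.two_mul_card_filter_oddLetters_add_le hτ hN hper (m := k + 1) le_rfl (by omega) t
      omega
  rw [sum_card_filter_odd_eq _ (hC.windowCount_le_one hτ (by omega) le_rfl)] at hpoint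
  simp only [← two_mul_windowCount_period hN hper _ 0, ← mul_sum, sum_const, card_univ,
    ZMod.card, smul_eq_mul] at hpoint
  subst hN
  nlinarith

theorem IsCircuitCode.le_three_mul_add_two (hC : IsCircuitCode d k N x)
    (hτ : IsTransitionSeq x τ) (hk : 4 ≤ k) (hd : 2 * d = 3 * k + 4) (hN : N = 2 * p)
    (hper : ∀ i : ZMod N, τ (i + p) = τ i) : p ≤ 3 * k + 2 := by
  by_contra! hp
  have : NeZero N := ⟨by omega⟩
  have hα := hC.lt_card_oddLetters hτ hN hper (by omega) (by omega)
  have hsum := sum_windowCount_oddLetters_add_compl τ p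
  have hcompl := card_add_card_compl (oddLetters τ p)
  rw [Fintype.card_fin] at hcompl
  have hbound := hC.sum_compl_oddLetters_le hτ hN hper hp
  obtain hα' | hα' : #(oddLetters τ p) = k + 1 ∨ k + 2 ≤ #(oddLetters τ p) := by omega
  · have hq := hC.four_mul_sum_oddLetters_le hτ hN hper (by omega) (by omega) hα'
    generalize ∑ c ∈ oddLetters τ p, windowCount τ c 0 p = q at *
    generalize ∑ c ∈ (oddLetters τ p)ᶜ, windowCount τ c 0 p = r at *
    generalize #(oddLetters τ p)ᶜ = b at *
    rw [hα'] at hbound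
    have key : p * (4 * k + 2) ≤ p * (3 * k + 5) := by nlinarith
    have := Nat.le_of_mul_le_mul_left key (by omega)
    omega
  · have hq := hC.mul_sum_oddLetters_le hτ hN hper (by omega)
    generalize ∑ c ∈ oddLetters τ p, windowCount τ c 0 p = q at *
    generalize ∑ c ∈ (oddLetters τ p)ᶜ, windowCount τ c 0 p = r at *
    generalize #(oddLetters τ p)ᶜ = b at *
    generalize #(oddLetters τ p) = a at *
    have key : p * (6 * k + 4) ≤ p * (a + 4 * b + 4 * ((a + 1) / 2)) := by nlinarith
    have := Nat.le_of_mul_le_mul_left key (by omega)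
    omega

theorem IsCircuitCode.half_length_le (hC : IsCircuitCode d k N x)
    (hτ : IsTransitionSeq x τ) (hk : 4 ≤ k) (hd : 2 * d = 3 * k + 4) (hN : N = 2 * p)
    (hper : ∀ i : ZMod N, τ (i + p) = τ i) : p ≤ 2 * k + 3 := by
  by_contra! hp
  have : NeZero N := ⟨by omega⟩
  have hα := hC.lt_card_oddLetters hτ hN hper (by omega) (by omega)
  by_cases hsmall : ∀ c, windowCount τ c 0 p ≤ 2
  · have := segDelta_add_le_two_mul hsmall
    rw [← card_oddLetters] at this
    omega
  obtain ⟨c, hc⟩ := not_forall.mp hsmall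
  have := hC.three_mul_le_of_three_le_windowCount hτ hN hper (by omega) (not_le.mp hc)
  have := hC.le_three_mul_add_two hτ hk hd hN hper
  omega

end Periodic

/-- The `r`-th term of `0, h+1, 1, h+2, …, 2h, h, 0, 2h+1, 1, 2h+2, …, h, 3h+1`: the letters
`0, …, h` sit at the even positions up to `2h` and again at the odd positions from `2h + 1` on. -/
def codeLetter (h r : ℕ) : ℕ :=
  if r ≤ 2 * h then (if r % 2 = 0 then r / 2 else h + 1 + r / 2)
  else if r % 2 = 0 then h + r / 2 else r / 2 - h

theorem codeLetter_lt {h r : ℕ} (hr : r < 4 * h + 3) : codeLetter h r < 3 * h + 2 := by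
  unfold codeLetter; split_ifs <;> omega

theorem codeLetter_eq_codeLetter {h r r' : ℕ} (hr : r < r') (hr' : r' < 4 * h + 3)
    (heq : codeLetter h r = codeLetter h r') :
    r % 2 = 0 ∧ r ≤ 2 * h ∧ r' = r + 2 * h + 1 := by
  unfold codeLetter at heq; split_ifs at heq <;> omega

theorem mod_eq_or_mod_add_eq {v P : ℕ} (hv : v < 2 * P) : v % P = v ∨ v % P + P = v := by
  rcases Nat.lt_or_ge v P with h | h
  · exact .inl (Nat.mod_eq_of_lt h)
  · right
    rw [Nat.mod_eq_sub_mod h, Nat.mod_eq_of_lt (by omega)]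
    omega

/-- `r` is `t + j` reduced modulo the period; a pair of equal letters of length `2h + 1` or
`2h + 2` starts there and ends inside the window `[t, t + m)`. -/
def PairStartIn (h t m j : ℕ) : Prop :=
  ∃ r, (r = t + j ∨ r + (4 * h + 3) = t + j) ∧
    (r % 2 = 0 ∧ r ≤ 2 * h ∧ j + 2 * h + 1 < m ∨
      r % 2 = 1 ∧ 2 * h < r ∧ r < 4 * h + 3 ∧ j + 2 * h + 2 < m)

theorem pairStartIn_of_codeLetter_eq {h t m j j' : ℕ} (ht : t < 4 * h + 3)
    (hm : m ≤ 4 * h + 3) (hjj' : j < j') (hj'm : j' < m)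
    (heq : codeLetter h ((t + j) % (4 * h + 3)) = codeLetter h ((t + j') % (4 * h + 3))) :
    PairStartIn h t m j := by
  have hr := mod_eq_or_mod_add_eq (v := t + j) (P := 4 * h + 3) (by omega)
  have hr' := mod_eq_or_mod_add_eq (v := t + j') (P := 4 * h + 3) (by omega)
  have hlt := Nat.mod_lt (t + j) (show 0 < 4 * h + 3 by omega)
  have hlt' := Nat.mod_lt (t + j') (show 0 < 4 * h + 3 by omega)
  refine ⟨_, hr, ?_⟩
  rcases lt_trichotomy ((t + j) % (4 * h + 3)) ((t + j') % (4 * h + 3)) with h1 | h1 | h1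
  · have := codeLetter_eq_codeLetter h1 hlt' heq
    omega
  · omega
  · have := codeLetter_eq_codeLetter h1 hlt heq.symm
    omega

/-- The map `j ↦ j / 2`, shifted by one at odd positions when `t ≤ 2h`, is injective on the
first members of the pairs. -/
theorem card_pairStartIn_le {h t m : ℕ} (S : Finset (Fin m))
    (hS : ∀ j ∈ S, PairStartIn h t m j) (ht : t < 4 * h + 3) (hm : m ≤ 4 * h + 3) :
    #S ≤ (m - 2 * h) / 2 := by
  let f : Fin m → ℕ := fun j => if t ≤ 2 * h then (j + (t + j) % 2) / 2 else j / 2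
  calc #S ≤ #(range ((m - 2 * h) / 2)) := by
        refine card_le_card_of_injOn f (fun j hj => ?_) fun j hj j' hj' hf => ?_
        · obtain ⟨r, hr, hcase⟩ := hS j hj
          simp only [coe_range, Set.mem_Iio, f]
          split_ifs <;> omega
        · obtain ⟨r, hr, hcase⟩ := hS j hj
          obtain ⟨r', hr', hcase'⟩ := hS j' hj'
          simp only [f] at hf
          ext
          split_ifs at hf <;> omega
    _ = _ := card_range _

def codeSeq (h N : ℕ) (i : ZMod N) : Fin (3 * h + 2) :=
  ⟨codeLetter h (i.val % (4 * h + 3)), codeLetter_lt (Nat.mod_lt _ (by omega))⟩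

theorem codeSeq_add_natCast {h N : ℕ} (hN : N = 2 * (4 * h + 3)) (s : ZMod N) (j : ℕ) :
    (codeSeq h N (s + j) : ℕ) = codeLetter h ((s.val % (4 * h + 3) + j) % (4 * h + 3)) := by
  have : NeZero N := ⟨by omega⟩
  have hdvd : 4 * h + 3 ∣ N := ⟨2, by omega⟩
  simp only [codeSeq]
  rw [ZMod.val_add, ZMod.val_natCast, Nat.mod_mod_of_dvd _ hdvd, ← Nat.add_mod_mod,
    Nat.mod_mod_of_dvd _ hdvd, Nat.add_mod_mod, Nat.mod_add_mod]

theorem codeSeq_add_period {h N : ℕ} (hN : N = 2 * (4 * h + 3)) (i : ZMod N) :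
    codeSeq h N (i + (4 * h + 3 : ℕ)) = codeSeq h N i := by
  ext
  rw [codeSeq_add_natCast hN, Nat.add_mod_right, Nat.mod_mod]
  rfl

theorem min_le_segDelta_codeSeq {h N : ℕ} (hN : N = 2 * (4 * h + 3)) (s : ZMod N) {m : ℕ}
    (hm : 2 * m ≤ N) : min m (2 * h) ≤ segDelta (codeSeq h N) s m := by
  have := card_pairStartIn_le (h := h) (t := s.val % (4 * h + 3)) (m := m)
    {j : Fin m | ∃ j' : Fin m, j < j' ∧
      codeSeq h N (s + (j' : ℕ)) = codeSeq h N (s + (j : ℕ))}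
    (fun j hj => by
      obtain ⟨j', hlt, heq⟩ := (mem_filter.mp hj).2
      rw [Fin.ext_iff, codeSeq_add_natCast hN, codeSeq_add_natCast hN] at heq
      exact pairStartIn_of_codeLetter_eq (Nat.mod_lt _ (by omega)) (by omega) hlt j'.isLt
        heq.symm)
    (Nat.mod_lt _ (by omega)) (by omega)
  have := le_segDelta_add_two_mul_card (τ := codeSeq h N) s m
  omega

theorem exists_symmetric_circuitCode {h N : ℕ} (hh : 0 < h) (hN : N = 2 * (4 * h + 3)) :
    ∃ (x : ZMod N → Fin (3 * h + 2) → Bool) (τ : ZMod N → Fin (3 * h + 2)),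
      IsCircuitCode (3 * h + 2) (2 * h) N x ∧ IsTransitionSeq x τ ∧
        ∀ i : ZMod N, τ (i + (4 * h + 3 : ℕ)) = τ i := by
  have : NeZero N := ⟨by omega⟩
  have hτ := isTransitionSeq_prefixParity (τ := codeSeq h N) fun c =>
    ⟨_, (two_mul_windowCount_period hN (codeSeq_add_period hN) c 0).symm.trans (two_mul _)⟩
  exact ⟨_, _, isCircuitCode_of_le_segDelta (by omega) hτ
    fun s m hm => min_le_segDelta_codeSeq hN s hm, hτ, codeSeq_add_period hN⟩

/-- Lemma 4 (value): for even `k ≥ 4` and `d = (3k+4)/2`, the maximum length of a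
symmetric `(d,k)` circuit code is `4k+6`. -/
theorem stmt_4 (k d : ℕ) (hk : Even k) (hk4 : 4 ≤ k) (hd : 2 * d = 3 * k + 4) :
    (∃ (x : ZMod (4 * k + 6) → Fin d → Bool) (τ : ZMod (4 * k + 6) → Fin d),
        IsCircuitCode d k (4 * k + 6) x ∧ IsTransitionSeq x τ ∧
        ∀ i : ZMod (4 * k + 6), τ (i + ((2 * k + 3 : ℕ) : ZMod (4 * k + 6))) = τ i) ∧
      ∀ (N : ℕ), Even N → ∀ (x : ZMod N → Fin d → Bool) (τ : ZMod N → Fin d),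
        IsCircuitCode d k N x → IsTransitionSeq x τ →
        (∀ i : ZMod N, τ (i + ((N / 2 : ℕ) : ZMod N)) = τ i) → N ≤ 4 * k + 6 := by
  refine ⟨?_, fun N hN x τ hC hτ hsym => ?_⟩
  · obtain ⟨h, rfl⟩ := hk
    obtain rfl : d = 3 * h + 2 := by omega
    rw [← two_mul, show 2 * (2 * h) + 3 = 4 * h + 3 by ring]
    exact exists_symmetric_circuitCode (by omega) (by ring)
  · obtain ⟨p, rfl⟩ := hN
    rw [show (p + p) / 2 = p by omega] at hsym
    have := hC.half_length_le hτ hk4 hd (by ring) hsym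
    omega
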